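/- Convexification at δ = 0 under SOSC (Corollary 3.6): Assume SOSC. Then the convexification recursion with parameter δ = 0 satisfies R̃_k(0) ≻ 0 for all k = 0,…,N−1, and the block matrices H̃_k(0) = [[Q̃_k(0), S̃_k(0)ᵀ],[S̃_k(0), R̃_k(0)]] are positive semidefinite for all k = 0,…,N−1 (and H̃_N(0) = 0 is positive semidefinite). -/

import Mathlib

/-!
Completing the square shows that along any trajectory following the feedback law
`u_j = -R̃_j⁻¹ S̃_j x_j` on stages `a, …, N-1`, the cost of those stages plus the terminal cost
equals `x_aᵀ Q̄_a x_a`. Going down in `k`, once `R̃_j` is invertible for all `j > k`, the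
trajectory that rests at `0`, applies an input `v` at time `k` and then follows the feedback law
has total cost `vᵀ R̃_k v`, which SOSC makes positive for `v ≠ 0`. Finally `H̃_k` is positive
semidefinite because its Schur complement `Q̃_k - S̃_kᵀ R̃_k⁻¹ S̃_k` vanishes.
-/

open Matrix BigOperators Finset

/-- SOSC: the homogeneous quadratic objective is positive on every nonzero
feasible homogeneous trajectory. -/
def SOSC {nx nu : ℕ} (N : ℕ)
    (A : ℕ → Matrix (Fin nx) (Fin nx) ℝ) (B : ℕ → Matrix (Fin nx) (Fin nu) ℝ)
    (Q : ℕ → Matrix (Fin nx) (Fin nx) ℝ) (R : ℕ → Matrix (Fin nu) (Fin nu) ℝ)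
    (S : ℕ → Matrix (Fin nu) (Fin nx) ℝ) : Prop :=
  ∀ (p : ℕ → Fin nx → ℝ) (q : ℕ → Fin nu → ℝ),
    p 0 = 0 → (∀ k < N, p (k + 1) = A k *ᵥ p k + B k *ᵥ q k) →
    ¬ ((∀ k ≤ N, p k = 0) ∧ (∀ k < N, q k = 0)) →
    0 < (∑ k ∈ range N,
        (p k ⬝ᵥ Q k *ᵥ p k + 2 * (q k ⬝ᵥ S k *ᵥ p k) + q k ⬝ᵥ R k *ᵥ q k))
      + p N ⬝ᵥ Q N *ᵥ p N

lemma Matrix.IsSymm.transpose_mul_mul {m n α : Type*} [Fintype m] [CommSemiring α]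
    {P : Matrix m m α} (hP : P.IsSymm) (B : Matrix m n α) : (Bᵀ * P * B).IsSymm := by
  simp [IsSymm, transpose_mul, hP.eq, Matrix.mul_assoc]

section MatrixLemmas

variable {m n o : Type*} [Fintype m] [Fintype n] [Fintype o]

lemma mulVec_dotProduct_mulVec {α : Type*} [CommSemiring α] (K : Matrix o m α)
    (M : Matrix o n α) (x : m → α) (y : n → α) :
    (K *ᵥ x) ⬝ᵥ M *ᵥ y = x ⬝ᵥ (Kᵀ * M) *ᵥ y := by
  rw [dotProduct_mulVec, vecMul_mulVec, ← dotProduct_mulVec]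

lemma dotProduct_mulVec_swap {α : Type*} [CommSemiring α] (M : Matrix m n α) (x : m → α)
    (y : n → α) :
    x ⬝ᵥ M *ᵥ y = y ⬝ᵥ Mᵀ *ᵥ x := by
  rw [dotProduct_mulVec, ← mulVec_transpose, dotProduct_comm]

theorem Matrix.PosDef.posSemidef_fromBlocks_schur [DecidableEq n] {D : Matrix n n ℝ}
    (hD : D.PosDef) (C : Matrix n m ℝ) : (fromBlocks (Cᵀ * D⁻¹ * C) Cᵀ C D).PosSemidef := by
  have := hD.isUnit.invertible
  have hC : Cᵀᴴ = C := by simp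
  simpa [hC] using (PosDef.fromBlocks₂₂ (Cᵀ * D⁻¹ * C) Cᵀ hD).2 (by simpa using PosSemidef.zero)

end MatrixLemmas

section StageCost

variable {m n o : Type*} [Fintype m] [Fintype n] [Fintype o]

def stageCost (Q : Matrix m m ℝ) (S : Matrix n m ℝ) (R : Matrix n n ℝ) (x : m → ℝ)
    (u : n → ℝ) : ℝ :=
  x ⬝ᵥ Q *ᵥ x + 2 * (u ⬝ᵥ S *ᵥ x) + u ⬝ᵥ R *ᵥ u

lemma stageCost_add_dotProduct_mulVec {P : Matrix o o ℝ} (hP : P.IsSymm) (A : Matrix o m ℝ)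
    (B : Matrix o n ℝ) (Q : Matrix m m ℝ) (S : Matrix n m ℝ) (R : Matrix n n ℝ) (x : m → ℝ)
    (u : n → ℝ) :
    stageCost Q S R x u + (A *ᵥ x + B *ᵥ u) ⬝ᵥ P *ᵥ (A *ᵥ x + B *ᵥ u) =
      stageCost (Q + Aᵀ * P * A) (S + Bᵀ * P * A) (R + Bᵀ * P * B) x u := by
  have hcross : x ⬝ᵥ (Aᵀ * P * B) *ᵥ u = u ⬝ᵥ (Bᵀ * P * A) *ᵥ x := by
    rw [dotProduct_mulVec_swap, transpose_mul, transpose_mul, transpose_transpose, hP.eq,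
      Matrix.mul_assoc]
  simp only [stageCost, mulVec_add, dotProduct_add, add_dotProduct, add_mulVec,
    mulVec_dotProduct_mulVec, mulVec_mulVec, ← Matrix.mul_assoc, hcross]
  ring

lemma stageCost_zero_left (Q : Matrix m m ℝ) (S : Matrix n m ℝ) (R : Matrix n n ℝ)
    (u : n → ℝ) : stageCost Q S R 0 u = u ⬝ᵥ R *ᵥ u := by
  simp [stageCost]

lemma stageCost_neg_inv_mul_mulVec [DecidableEq n] (Q : Matrix m m ℝ) (S : Matrix n m ℝ)
    {R : Matrix n n ℝ} (hR : R.IsSymm) (hdet : IsUnit R.det) (x : m → ℝ) :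
    stageCost Q S R x (-((R⁻¹ * S) *ᵥ x)) = x ⬝ᵥ (Q - Sᵀ * R⁻¹ * S) *ᵥ x := by
  have hK : (R⁻¹ * S)ᵀ = Sᵀ * R⁻¹ := by
    rw [transpose_mul, transpose_nonsing_inv, hR.eq]
  have hquad : Sᵀ * R⁻¹ * (R * (R⁻¹ * S)) = Sᵀ * R⁻¹ * S := by
    rw [← Matrix.mul_assoc R, mul_nonsing_inv R hdet, Matrix.one_mul]
  simp only [stageCost, mulVec_neg, neg_dotProduct, dotProduct_neg, neg_neg,
    mulVec_dotProduct_mulVec, mulVec_mulVec, hK, hquad, sub_mulVec, dotProduct_sub]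
  ring

end StageCost

section Recursion

variable {m n : Type*} [Fintype m] [Fintype n] [DecidableEq n]

/-- Algorithm 1 at `δ = 0`, with `Q̃_k = S̃_kᵀ R̃_k⁻¹ S̃_k` substituted into `Q̄_k`. -/
structure IsConvexification (N : ℕ) (A : ℕ → Matrix m m ℝ) (B : ℕ → Matrix m n ℝ)
    (Q : ℕ → Matrix m m ℝ) (R : ℕ → Matrix n n ℝ) (S : ℕ → Matrix n m ℝ)
    (Qbar : ℕ → Matrix m m ℝ) (Rt : ℕ → Matrix n n ℝ) (St : ℕ → Matrix n m ℝ) : Prop where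
  Qbar_last : Qbar N = Q N
  Rt_eq : ∀ k < N, Rt k = R k + (B k)ᵀ * Qbar (k + 1) * B k
  St_eq : ∀ k < N, St k = S k + (B k)ᵀ * Qbar (k + 1) * A k
  Qbar_eq : ∀ k < N, Qbar k = Q k + (A k)ᵀ * Qbar (k + 1) * A k - (St k)ᵀ * (Rt k)⁻¹ * St k

namespace IsConvexification

variable {N : ℕ} {A : ℕ → Matrix m m ℝ} {B : ℕ → Matrix m n ℝ} {Q : ℕ → Matrix m m ℝ}
  {R : ℕ → Matrix n n ℝ} {S : ℕ → Matrix n m ℝ} {Qbar : ℕ → Matrix m m ℝ}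
  {Rt : ℕ → Matrix n n ℝ} {St : ℕ → Matrix n m ℝ}

lemma isSymm_Rt (h : IsConvexification N A B Q R S Qbar Rt St) {k : ℕ} (hk : k < N)
    (hR : (R k).IsSymm) (hQbar : (Qbar (k + 1)).IsSymm) : (Rt k).IsSymm := by
  rw [h.Rt_eq k hk]
  exact hR.add (hQbar.transpose_mul_mul _)

lemma isSymm_Qbar (h : IsConvexification N A B Q R S Qbar Rt St)
    (hQ : ∀ k ≤ N, (Q k).IsSymm) (hR : ∀ k < N, (R k).IsSymm) {k : ℕ} (hk : k ≤ N) :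
    (Qbar k).IsSymm := by
  induction hk using Nat.decreasingInduction with
  | self => exact h.Qbar_last ▸ hQ N le_rfl
  | of_succ k hk hQbar =>
    rw [h.Qbar_eq k hk]
    exact ((hQ k hk.le).add (hQbar.transpose_mul_mul _)).sub
      ((h.isSymm_Rt hk (hR k hk) hQbar).inv.transpose_mul_mul _)

lemma stageCost_add_succ (h : IsConvexification N A B Q R S Qbar Rt St) {k : ℕ} (hk : k < N)
    (hQbar : (Qbar (k + 1)).IsSymm) (x : m → ℝ) (u : n → ℝ) :
    stageCost (Q k) (S k) (R k) x u
        + (A k *ᵥ x + B k *ᵥ u) ⬝ᵥ Qbar (k + 1) *ᵥ (A k *ᵥ x + B k *ᵥ u)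
      = stageCost (Q k + (A k)ᵀ * Qbar (k + 1) * A k) (St k) (Rt k) x u := by
  rw [stageCost_add_dotProduct_mulVec hQbar, h.St_eq k hk, h.Rt_eq k hk]

lemma sum_stageCost_add_terminal (h : IsConvexification N A B Q R S Qbar Rt St)
    (hQ : ∀ k ≤ N, (Q k).IsSymm) (hR : ∀ k < N, (R k).IsSymm)
    {p : ℕ → m → ℝ} {q : ℕ → n → ℝ} (hp : ∀ j < N, p (j + 1) = A j *ᵥ p j + B j *ᵥ q j)
    {a : ℕ} (ha : a ≤ N) (hq : ∀ j, a ≤ j → j < N → q j = -(((Rt j)⁻¹ * St j) *ᵥ p j))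
    (hdet : ∀ j, a ≤ j → j < N → IsUnit (Rt j).det) :
    ∑ j ∈ Ico a N, stageCost (Q j) (S j) (R j) (p j) (q j) + p N ⬝ᵥ Q N *ᵥ p N
      = p a ⬝ᵥ Qbar a *ᵥ p a := by
  induction ha using Nat.decreasingInduction with
  | self => simp [h.Qbar_last]
  | of_succ a ha ih =>
    have hQbar := h.isSymm_Qbar hQ hR ha
    rw [sum_eq_sum_Ico_succ_bot ha, add_assoc,
      ih (fun j hj ↦ hq j (by omega)) (fun j hj ↦ hdet j (by omega)), hp a ha,
      h.stageCost_add_succ ha hQbar, hq a le_rfl ha,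
      stageCost_neg_inv_mul_mulVec _ _ (h.isSymm_Rt ha (hR a ha) hQbar) (hdet a le_rfl ha),
      ← h.Qbar_eq a ha]

end IsConvexification

end Recursion

def stateTrajectory {m n : Type*} [Fintype m] [Fintype n] (A : ℕ → Matrix m m ℝ)
    (B : ℕ → Matrix m n ℝ) (u : ℕ → (m → ℝ) → n → ℝ) : ℕ → m → ℝ
  | 0 => 0
  | j + 1 => A j *ᵥ stateTrajectory A B u j + B j *ᵥ u j (stateTrajectory A B u j)

namespace IsConvexification

variable {nx nu N : ℕ} {A : ℕ → Matrix (Fin nx) (Fin nx) ℝ} {B : ℕ → Matrix (Fin nx) (Fin nu) ℝ}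
  {Q : ℕ → Matrix (Fin nx) (Fin nx) ℝ} {R : ℕ → Matrix (Fin nu) (Fin nu) ℝ}
  {S : ℕ → Matrix (Fin nu) (Fin nx) ℝ} {Qbar : ℕ → Matrix (Fin nx) (Fin nx) ℝ}
  {Rt : ℕ → Matrix (Fin nu) (Fin nu) ℝ} {St : ℕ → Matrix (Fin nu) (Fin nx) ℝ}

theorem posDef_Rt (h : IsConvexification N A B Q R S Qbar Rt St)
    (hQ : ∀ k ≤ N, (Q k).IsSymm) (hR : ∀ k < N, (R k).IsSymm) (hsosc : SOSC N A B Q R S)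
    {k : ℕ} (hk : k < N) (hdet : ∀ j, k < j → j < N → IsUnit (Rt j).det) : (Rt k).PosDef := by
  have hQbar := h.isSymm_Qbar hQ hR hk
  refine PosDef.of_dotProduct_mulVec_pos
    (isHermitian_iff_isSymm.2 (h.isSymm_Rt hk (hR k hk) hQbar)) fun v hv ↦ ?_
  rw [star_trivial]
  set u : ℕ → (Fin nx → ℝ) → Fin nu → ℝ := fun j x ↦
    if j = k then v else if k < j then -(((Rt j)⁻¹ * St j) *ᵥ x) else 0
  set p := stateTrajectory A B u
  have hp_zero : ∀ j ≤ k, p j = 0 := by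
    intro j hj
    induction j with
    | zero => rfl
    | succ j ih =>
      simp [p, stateTrajectory, ih (by omega), u, show j ≠ k by omega, show ¬k < j by omega]
  have hcost := hsosc p (fun j ↦ u j (p j)) rfl (fun j _ ↦ rfl)
    fun hzero ↦ hv (by simpa [u] using hzero.2 k hk)
  have hhead : ∑ j ∈ range N, stageCost (Q j) (S j) (R j) (p j) (u j (p j))
      = stageCost (Q k) (S k) (R k) (p k) (u k (p k))
        + ∑ j ∈ Ico (k + 1) N, stageCost (Q j) (S j) (R j) (p j) (u j (p j)) := by
    rw [← sum_range_add_sum_Ico _ hk.le, sum_eq_sum_Ico_succ_bot hk, sum_eq_zero, zero_add]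
    intro j hj
    have hjk : j < k := mem_range.1 hj
    simp [hp_zero j hjk.le, u, hjk.ne, hjk.not_gt, stageCost]
  have htail := h.sum_stageCost_add_terminal hQ hR (p := p) (q := fun j ↦ u j (p j))
    (fun j _ ↦ rfl) hk (fun j _ _ ↦ by simp [u, show j ≠ k by omega, show k < j by omega]) hdet
  have hfirst : stageCost (Q k) (S k) (R k) (p k) (u k (p k))
      + p (k + 1) ⬝ᵥ Qbar (k + 1) *ᵥ p (k + 1) = v ⬝ᵥ Rt k *ᵥ v := by
    rw [show p (k + 1) = A k *ᵥ p k + B k *ᵥ u k (p k) from rfl, h.stageCost_add_succ hk hQbar,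
      hp_zero k le_rfl, show u k 0 = v from if_pos rfl, stageCost_zero_left]
  change 0 < ∑ j ∈ range N, stageCost (Q j) (S j) (R j) (p j) (u j (p j))
    + p N ⬝ᵥ Q N *ᵥ p N at hcost
  rwa [hhead, add_assoc, htail, hfirst] at hcost

theorem forall_posDef_Rt (h : IsConvexification N A B Q R S Qbar Rt St)
    (hQ : ∀ k ≤ N, (Q k).IsSymm) (hR : ∀ k < N, (R k).IsSymm) (hsosc : SOSC N A B Q R S) :
    ∀ k < N, (Rt k).PosDef := by
  suffices hsuffix : ∀ a ≤ N, ∀ k, a ≤ k → k < N → (Rt k).PosDef from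
    fun k hk ↦ hsuffix 0 (Nat.zero_le N) k (Nat.zero_le k) hk
  intro a ha
  induction ha using Nat.decreasingInduction with
  | self => intro k hNk hkN; omega
  | of_succ a _ ih =>
    intro k hak hkN
    rcases hak.eq_or_lt with rfl | hak
    · exact h.posDef_Rt hQ hR hsosc hkN fun j hkj hjN ↦
        (isUnit_iff_isUnit_det _).1 (ih j hkj hjN).isUnit
    · exact ih k hak hkN

end IsConvexification

theorem convexification_delta_zero_posdef_general
    (N nx nu : ℕ)
    (A : ℕ → Matrix (Fin nx) (Fin nx) ℝ) (B : ℕ → Matrix (Fin nx) (Fin nu) ℝ)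
    (Q : ℕ → Matrix (Fin nx) (Fin nx) ℝ) (R : ℕ → Matrix (Fin nu) (Fin nu) ℝ)
    (S : ℕ → Matrix (Fin nu) (Fin nx) ℝ)
    (hQsymm : ∀ k ≤ N, (Q k).IsSymm) (hRsymm : ∀ k < N, (R k).IsSymm)
    (hsosc : SOSC N A B Q R S)
    (Qbar : ℕ → Matrix (Fin nx) (Fin nx) ℝ) (Rt : ℕ → Matrix (Fin nu) (Fin nu) ℝ)
    (St : ℕ → Matrix (Fin nu) (Fin nx) ℝ) (Qt : ℕ → Matrix (Fin nx) (Fin nx) ℝ)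
    (hQbarN : Qbar N = Q N - (0 : ℝ) • (1 : Matrix (Fin nx) (Fin nx) ℝ))
    (hRt : ∀ k < N, Rt k = R k + (B k)ᵀ * Qbar (k + 1) * B k)
    (hSt : ∀ k < N, St k = S k + (B k)ᵀ * Qbar (k + 1) * A k)
    (hQt : ∀ k < N, Qt k = (St k)ᵀ * (Rt k)⁻¹ * St k
      + (0 : ℝ) • (1 : Matrix (Fin nx) (Fin nx) ℝ))
    (hQbar : ∀ k < N, Qbar k = Q k + (A k)ᵀ * Qbar (k + 1) * A k - Qt k) :
    (∀ k < N, (Rt k).PosDef) ∧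
    (∀ k < N, (Matrix.fromBlocks (Qt k) (St k)ᵀ (St k) (Rt k)).PosSemidef) ∧
    (0 : Matrix (Fin nx ⊕ Fin nu) (Fin nx ⊕ Fin nu) ℝ).PosSemidef := by
  have hQt' : ∀ k < N, Qt k = (St k)ᵀ * (Rt k)⁻¹ * St k := fun k hk ↦ by
    rw [hQt k hk, zero_smul, add_zero]
  have h : IsConvexification N A B Q R S Qbar Rt St :=
    { Qbar_last := by rw [hQbarN, zero_smul, sub_zero]
      Rt_eq := hRt
      St_eq := hSt
      Qbar_eq := fun k hk ↦ by rw [hQbar k hk, hQt' k hk] }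
  have hRt_pos := h.forall_posDef_Rt hQsymm hRsymm hsosc
  refine ⟨hRt_pos, fun k hk ↦ ?_, PosSemidef.zero⟩
  rw [hQt' k hk]
  exact (hRt_pos k hk).posSemidef_fromBlocks_schur (St k)

/-- **Convexification at `δ = 0` under SOSC (Corollary 3.6).**  The recursion with
parameter `0` produces `R̃_k(0) ≻ 0` and positive semidefinite blocks
`H̃_k(0) = [[Q̃_k(0), S̃_k(0)ᵀ],[S̃_k(0), R̃_k(0)]]` for `k < N`, while
`H̃_N(0) = 0` is positive semidefinite. -/
theorem convexification_delta_zero_posdef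
    (N nx nu : ℕ) (hN : 1 ≤ N) (hnx : 1 ≤ nx) (hnu : 1 ≤ nu)
    (A : ℕ → Matrix (Fin nx) (Fin nx) ℝ) (B : ℕ → Matrix (Fin nx) (Fin nu) ℝ)
    (Q : ℕ → Matrix (Fin nx) (Fin nx) ℝ) (R : ℕ → Matrix (Fin nu) (Fin nu) ℝ)
    (S : ℕ → Matrix (Fin nu) (Fin nx) ℝ)
    (hQsymm : ∀ k ≤ N, (Q k).IsSymm) (hRsymm : ∀ k < N, (R k).IsSymm)
    (hsosc : SOSC N A B Q R S)
    (Qbar : ℕ → Matrix (Fin nx) (Fin nx) ℝ) (Rt : ℕ → Matrix (Fin nu) (Fin nu) ℝ)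
    (St : ℕ → Matrix (Fin nu) (Fin nx) ℝ) (Qt : ℕ → Matrix (Fin nx) (Fin nx) ℝ)
    (hQbarN : Qbar N = Q N - (0 : ℝ) • (1 : Matrix (Fin nx) (Fin nx) ℝ))
    (hRt : ∀ k < N, Rt k = R k + (B k)ᵀ * Qbar (k + 1) * B k)
    (hSt : ∀ k < N, St k = S k + (B k)ᵀ * Qbar (k + 1) * A k)
    (hQt : ∀ k < N, Qt k = (St k)ᵀ * (Rt k)⁻¹ * St k
      + (0 : ℝ) • (1 : Matrix (Fin nx) (Fin nx) ℝ))
    (hQbar : ∀ k < N, Qbar k = Q k + (A k)ᵀ * Qbar (k + 1) * A k - Qt k) :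
    (∀ k < N, (Rt k).PosDef) ∧
    (∀ k < N, (Matrix.fromBlocks (Qt k) (St k)ᵀ (St k) (Rt k)).PosSemidef) ∧
    (0 : Matrix (Fin nx ⊕ Fin nu) (Fin nx ⊕ Fin nu) ℝ).PosSemidef :=
  convexification_delta_zero_posdef_general N nx nu A B Q R S hQsymm hRsymm hsosc Qbar Rt St Qt
    hQbarN hRt hSt hQt hQbar
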